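/- arXiv:1607.03431 — 4 statements merged into one kernel-verified Lean document; each statement's English description precedes it below -/
import Mathlib

section
/- Let V be a symplectic vector space of even dimension n over a finite field k with q elements. Then the number of isotropic planes in V equals (q^n − 1)(q^{n−2} − 1)/((q^2 − 1)(q − 1)). -/
open Module Submodule

section Aux

variable {k : Type*} [Field k] [Fintype k]

private lemma aux_card_module (W : Type*) [AddCommGroup W] [Module k W]
    [FiniteDimensional k W] : Nat.card W = Fintype.card k ^ Module.finrank k W := by
  have : Finite W := Module.finite_of_finite k
  have := Fintype.ofFinite W
  rw [Nat.card_eq_fintype_card]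
  exact card_eq_pow_finrank

private lemma aux_card_span {W : Type*} [AddCommGroup W] [Module k W]
    (v : W) (hv : v ≠ 0) : Nat.card (span k {v}) = Fintype.card k := by
  rw [← Nat.card_eq_fintype_card (α := k)]
  exact Nat.card_congr (LinearEquiv.toSpanNonzeroSingleton k W v hv).toEquiv.symm

private lemma aux_card_mem_notMem {W : Type*} [AddCommGroup W] [Module k W] [Finite W]
    {A B : Submodule k W} (h : B ≤ A) :
    Nat.card {w : W // w ∈ A ∧ w ∉ B} = Nat.card A - Nat.card B := by
  have e : {w : W // w ∈ A ∧ w ∉ B} ≃ ((A : Set W) \ (B : Set W) : Set W) :=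
    Equiv.subtypeEquivRight (fun w => by simp [Set.mem_diff])
  have hA : Nat.card A = (A : Set W).ncard := Nat.card_coe_set_eq _
  have hB : Nat.card B = (B : Set W).ncard := Nat.card_coe_set_eq _
  rw [Nat.card_congr e, Nat.card_coe_set_eq, Set.ncard_diff h (Set.toFinite _), hA, hB]

private lemma aux_card_nonzero {W : Type*} [AddCommGroup W] [Module k W] [Finite W] :
    Nat.card {v : W // v ≠ 0} = Nat.card W - 1 := by
  classical
  have := Fintype.ofFinite W
  rw [Nat.card_eq_fintype_card, Nat.card_eq_fintype_card,
    Fintype.card_subtype_compl (p := fun v : W => v = 0), Fintype.card_subtype_eq]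

private lemma aux_count {α : Type*} [Finite α] (P : α → Prop) (R : α → α → Prop) (c : ℕ)
    (h : ∀ a, P a → Nat.card {b // R a b} = c) :
    Nat.card {p : α × α // P p.1 ∧ R p.1 p.2} = Nat.card {a // P a} * c := by
  classical
  have := Fintype.ofFinite α
  have e : {p : α × α // P p.1 ∧ R p.1 p.2} ≃ Σ a : {a // P a}, {b // R a.1 b} :=
    { toFun := fun p => ⟨⟨p.1.1, p.2.1⟩, ⟨p.1.2, p.2.2⟩⟩
      invFun := fun s => ⟨(s.1.1, s.2.1), s.1.2, s.2.2⟩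
      left_inv := fun p => rfl
      right_inv := fun s => rfl }
  rw [Nat.card_congr e, Nat.card_eq_fintype_card, Fintype.card_sigma,
    Nat.card_eq_fintype_card]
  have hc : ∀ a : {a // P a}, Fintype.card {b // R a.1 b} = c := fun a => by
    rw [← Nat.card_eq_fintype_card]; exact h a.1 a.2
  simp only [hc]
  rw [Finset.sum_const, smul_eq_mul, Finset.card_univ]

private lemma aux_fiber {α β : Type*} [Finite α] [Finite β] (f : α → β) (c : ℕ)
    (h : ∀ b, Nat.card {a // f a = b} = c) :
    Nat.card α = Nat.card β * c := by
  classical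
  have := Fintype.ofFinite α
  have := Fintype.ofFinite β
  rw [← Nat.card_congr (Equiv.sigmaFiberEquiv f), Nat.card_eq_fintype_card,
    Fintype.card_sigma, Nat.card_eq_fintype_card]
  have hc : ∀ b : β, Fintype.card {a // f a = b} = c := fun b => by
    rw [← Nat.card_eq_fintype_card]; exact h b
  simp only [hc]
  rw [Finset.sum_const, smul_eq_mul, Finset.card_univ]

end Aux

/-- The number of isotropic planes in an n-dimensional symplectic vector space
over a field with q elements is (q^n − 1)(q^{n−2} − 1)/((q² − 1)(q − 1)). -/
theorem stmt4 (k V : Type*) [Field k] [Fintype k] [AddCommGroup V] [Module k V]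
    [FiniteDimensional k V]
    (ω : V →ₗ[k] V →ₗ[k] k)
    (halt : ∀ v : V, ω v v = 0)
    (hnd : ∀ v : V, (∀ w : V, ω v w = 0) → v = 0)
    (q n : ℕ)
    (hq : Fintype.card k = q) (hn : Module.finrank k V = n)
    (heven : Even n) (hn2 : 2 ≤ n) :
    Nat.card {P : Submodule k V // Module.finrank k ↥P = 2 ∧
        ∀ x ∈ P, ∀ y ∈ P, ω x y = 0} =
      (q ^ n - 1) * (q ^ (n - 2) - 1) / ((q ^ 2 - 1) * (q - 1)) := by
  classical
  have hfinV : Finite V := Module.finite_of_finite k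
  have hfinSub : Finite (Submodule k V) :=
    Finite.of_injective (fun A => (A : Set V)) SetLike.coe_injective
  have hq2 : 2 ≤ q := hq ▸ Fintype.one_lt_card
  -- skew-symmetry
  have hskew : ∀ x y : V, ω y x = - ω x y := by
    intro x y
    have h := halt (x + y)
    simp only [map_add, LinearMap.add_apply, halt x, halt y] at h
    have h2 : (ω y) x + (ω x) y = 0 := by linear_combination h
    exact eq_neg_of_add_eq_zero_left h2
  -- linear independence of a pair
  have hli : ∀ v w : V, v ≠ 0 → w ∉ span k {v} → LinearIndependent k ![v, w] := by
    intro v w hv hw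
    exact (LinearIndependent.pair_iff' hv).2
      (fun a ha => hw (Submodule.mem_span_singleton.2 ⟨a, ha⟩))
  have hfr : ∀ v w : V, v ≠ 0 → w ∉ span k {v} →
      Module.finrank k (span k ({v, w} : Set V)) = 2 := by
    intro v w hv hw
    have h := finrank_span_eq_card (hli v w hv hw)
    rwa [Matrix.range_cons_cons_empty, Fintype.card_fin] at h
  -- isotropy of spanned plane
  have hiso : ∀ v w : V, ω v w = 0 →
      ∀ x ∈ span k ({v, w} : Set V), ∀ y ∈ span k ({v, w} : Set V), ω x y = 0 := by
    intro v w hvw x hx y hy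
    obtain ⟨a, b, rfl⟩ := Submodule.mem_span_pair.1 hx
    obtain ⟨c, d, rfl⟩ := Submodule.mem_span_pair.1 hy
    have hwv : ω w v = 0 := by rw [hskew v w, hvw, neg_zero]
    simp [map_add, map_smul, smul_eq_mul, halt, hvw, hwv]
  -- the type of "isotropic flags"
  set Planes := {P : Submodule k V // Module.finrank k ↥P = 2 ∧
      ∀ x ∈ P, ∀ y ∈ P, ω x y = 0} with hPlanes
  set T := {p : V × V // p.1 ≠ 0 ∧ (p.2 ∈ LinearMap.ker (ω p.1) ∧ p.2 ∉ span k {p.1})}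
    with hTdef
  -- first count of T
  have hTcount : Nat.card T = (q ^ n - 1) * (q ^ (n - 1) - q) := by
    have hc : ∀ v : V, v ≠ 0 →
        Nat.card {w : V // w ∈ LinearMap.ker (ω v) ∧ w ∉ span k {v}} = q ^ (n - 1) - q := by
      intro v hv
      have hsub : span k {v} ≤ LinearMap.ker (ω v) :=
        (Submodule.span_singleton_le_iff_mem _ _).2 (LinearMap.mem_ker.2 (halt v))
      rw [aux_card_mem_notMem hsub, aux_card_span v hv, hq]
      have hker : Module.finrank k (LinearMap.ker (ω v)) = n - 1 := by
        have hrnk := LinearMap.finrank_range_add_finrank_ker (ω v)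
        have hne : ω v ≠ 0 := fun h0 => hv (hnd v (fun w => by rw [h0]; rfl))
        have hrange : LinearMap.range (ω v) = ⊤ := by
          rcases Ideal.eq_bot_or_top (LinearMap.range (ω v)) with h | h
          · exact absurd (LinearMap.range_eq_bot.1 h) hne
          · exact h
        rw [hrange, finrank_top, finrank_self, hn] at hrnk
        omega
      rw [aux_card_module (k := k) (LinearMap.ker (ω v)), hker, hq]
    have h2 := aux_count (fun v : V => v ≠ 0)
      (fun v w => w ∈ LinearMap.ker (ω v) ∧ w ∉ span k {v}) (q ^ (n - 1) - q) hc
    beta_reduce at h2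
    rw [aux_card_nonzero (k := k) (W := V), aux_card_module (k := k) V, hq, hn] at h2
    exact h2
  -- count of independent pairs in each isotropic plane
  have hplane : ∀ P : Planes,
      Nat.card {x : ↥P.1 × ↥P.1 // x.1 ≠ 0 ∧ x.2 ∉ span k {x.1}} =
        (q ^ 2 - 1) * (q ^ 2 - q) := by
    intro P
    have hfinP : Finite ↥P.1 := Module.finite_of_finite k
    have hcardP : Nat.card ↥P.1 = q ^ 2 := by
      rw [aux_card_module (k := k) ↥P.1, P.2.1, hq]
    have hc : ∀ x : ↥P.1, x ≠ 0 →
        Nat.card {y : ↥P.1 // y ∉ span k {x}} = q ^ 2 - q := by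
      intro x hx
      have e : {y : ↥P.1 // y ∉ span k {x}} ≃ {y : ↥P.1 // y ∈ (⊤ : Submodule k ↥P.1) ∧
          y ∉ span k {x}} := Equiv.subtypeEquivRight (fun y => by simp)
      rw [Nat.card_congr e, aux_card_mem_notMem le_top, aux_card_span x hx, hq]
      have : Nat.card (⊤ : Submodule k ↥P.1) = q ^ 2 := by
        rw [Nat.card_congr Submodule.topEquiv.toEquiv, hcardP]
      rw [this]
    have h2 := aux_count (fun x : ↥P.1 => x ≠ 0) (fun x y => y ∉ span k {x}) (q ^ 2 - q) hc
    beta_reduce at h2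
    rw [aux_card_nonzero (k := k) (W := ↥P.1), hcardP] at h2
    exact h2
  -- the fibration T → Planes
  have hvwmem : ∀ p : T, (Module.finrank k ↥(span k ({p.1.1, p.1.2} : Set V)) = 2 ∧
      ∀ x ∈ span k ({p.1.1, p.1.2} : Set V), ∀ y ∈ span k ({p.1.1, p.1.2} : Set V),
        ω x y = 0) :=
    fun p => ⟨hfr _ _ p.2.1 p.2.2.2, hiso _ _ (LinearMap.mem_ker.1 p.2.2.1)⟩
  let f : T → Planes := fun p => ⟨span k ({p.1.1, p.1.2} : Set V), hvwmem p⟩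
  have hfiber : ∀ P : Planes, Nat.card {p : T // f p = P} = (q ^ 2 - 1) * (q ^ 2 - q) := by
    intro P
    rw [← hplane P]
    refine Nat.card_congr ?_
    refine { toFun := ?_, invFun := ?_, left_inv := ?_, right_inv := ?_ }
    · intro a
      obtain ⟨⟨⟨v, w⟩, hv, hker, hsp⟩, ha⟩ := a
      have hPeq : span k ({v, w} : Set V) = P.1 := congrArg Subtype.val ha
      have hvP : v ∈ P.1 := hPeq ▸ subset_span (by simp)
      have hwP : w ∈ P.1 := hPeq ▸ subset_span (by simp)
      refine ⟨(⟨v, hvP⟩, ⟨w, hwP⟩), ?_, ?_⟩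
      · exact fun h => hv (by simpa using congrArg Subtype.val h)
      · intro hmem
        obtain ⟨a, ha2⟩ := Submodule.mem_span_singleton.1 hmem
        exact hsp (Submodule.mem_span_singleton.2 ⟨a, congrArg Subtype.val ha2⟩)
    · intro x
      obtain ⟨⟨x1, x2⟩, hx1, hx2⟩ := x
      have hv : (x1 : V) ≠ 0 := fun h => hx1 (by exact_mod_cast ZeroMemClass.coe_eq_zero.1 h)
      have hns : (x2 : V) ∉ span k {(x1 : V)} := by
        intro hmem
        obtain ⟨a, ha2⟩ := Submodule.mem_span_singleton.1 hmem
        exact hx2 (Submodule.mem_span_singleton.2 ⟨a, Subtype.ext (by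
          simpa using ha2)⟩)
      have hker : (x2 : V) ∈ LinearMap.ker (ω x1) :=
        LinearMap.mem_ker.2 (P.2.2 _ x1.2 _ x2.2)
      refine ⟨⟨((x1 : V), (x2 : V)), hv, hker, hns⟩, ?_⟩
      refine Subtype.ext ?_
      show span k ({(x1 : V), (x2 : V)} : Set V) = P.1
      refine Submodule.eq_of_le_of_finrank_le ?_ ?_
      · rw [span_le]
        rintro z (rfl | rfl)
        · exact x1.2
        · exact x2.2
      · rw [hfr _ _ hv hns, P.2.1]
    · intro a
      obtain ⟨⟨⟨v, w⟩, hv, hker, hsp⟩, ha⟩ := a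
      rfl
    · intro x
      obtain ⟨⟨x1, x2⟩, hx1, hx2⟩ := x
      rfl
  have hmain : Nat.card T = Nat.card Planes * ((q ^ 2 - 1) * (q ^ 2 - q)) :=
    aux_fiber f _ hfiber
  -- arithmetic conclusion
  have hq0 : 0 < q := by omega
  have key : Nat.card Planes * ((q ^ 2 - 1) * (q ^ 2 - q)) =
      (q ^ n - 1) * (q ^ (n - 1) - q) := by rw [← hmain, hTcount]
  have h1 : q ^ 2 - q = q * (q - 1) := by
    rw [Nat.mul_sub, mul_one, sq]
  have h2 : q ^ (n - 1) - q = q * (q ^ (n - 2) - 1) := by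
    rw [Nat.mul_sub, mul_one, ← pow_succ']
    congr 2
    omega
  rw [h1, h2] at key
  have key2 : (q ^ n - 1) * (q ^ (n - 2) - 1) =
      Nat.card Planes * ((q ^ 2 - 1) * (q - 1)) := by
    have := key
    apply Nat.eq_of_mul_eq_mul_right hq0
    calc (q ^ n - 1) * (q ^ (n - 2) - 1) * q
        = (q ^ n - 1) * (q * (q ^ (n - 2) - 1)) := by ring
      _ = Nat.card Planes * ((q ^ 2 - 1) * (q * (q - 1))) := key.symm
      _ = Nat.card Planes * ((q ^ 2 - 1) * (q - 1)) * q := by ring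
  have hDpos : 0 < (q ^ 2 - 1) * (q - 1) := by
    have : 2 ≤ q ^ 2 := by nlinarith
    exact Nat.mul_pos (by omega) (by omega)
  exact (Nat.div_eq_of_eq_mul_left hDpos key2).symm
end

section
/- Let V be a symplectic vector space of even dimension n over a finite field k with q elements. Then the number of non-isotropic planes in V equals q^{n−2}(q^n − 1)/(q^2 − 1). -/
/-!
Count the pairs `(x, y)` with `ω x y = 1` in two ways. For each of the `q ^ n - 1` nonzero `x`,
nondegeneracy makes `ω x` a nonzero functional, with `q ^ (n - 1)` solutions `y`. On the other
hand such a pair spans a non-isotropic plane `P`, and `ω` restricted to `P` is again a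
nondegenerate alternating form, so by the same count every non-isotropic plane carries exactly
`(q ^ 2 - 1) q` of these pairs.
-/

open Module Submodule

section Counting

variable {k W : Type*} [Field k] [AddCommGroup W] [Module k W] [FiniteDimensional k W]

theorem Module.Dual.natCard_fiber_of_ne_zero {f : Dual k W} (hf : f ≠ 0) (c : k) :
    Nat.card {w // f w = c} = Nat.card k ^ (finrank k W - 1) := by
  obtain ⟨w₀, rfl⟩ := LinearMap.surjective hf c
  have e : {w // f w = f w₀} ≃ LinearMap.ker f :=
    { toFun w := ⟨w - w₀, by simp [w.2]⟩
      invFun w := ⟨w + w₀, by simp⟩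
      left_inv w := by simp
      right_inv w := by simp }
  rw [Nat.card_congr e, natCard_eq_pow_finrank (K := k), ← finrank_ker_add_one_of_ne_zero hf,
    Nat.add_sub_cancel]

theorem LinearMap.SeparatingLeft.natCard_pairs_eq_one [Finite k] {ω : W →ₗ[k] W →ₗ[k] k}
    (hω : ω.SeparatingLeft) :
    Nat.card {p : W × W // ω p.1 p.2 = 1} =
      (Nat.card k ^ finrank k W - 1) * Nat.card k ^ (finrank k W - 1) := by
  classical
  have : Finite W := Module.finite_of_finite k
  have : Fintype W := Fintype.ofFinite W
  have e : {p : W × W // ω p.1 p.2 = 1} ≃ Σ u : {u : W // u ≠ 0}, {v // ω u v = 1} :=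
    { toFun p := ⟨⟨p.1.1, by rintro h; simpa [h] using p.2⟩, p.1.2, p.2⟩
      invFun s := ⟨(s.1.1, s.2.1), s.2.2⟩
      left_inv p := rfl
      right_inv s := rfl }
  have hfiber (u : {u : W // u ≠ 0}) :
      Nat.card {v // ω u v = 1} = Nat.card k ^ (finrank k W - 1) :=
    Dual.natCard_fiber_of_ne_zero (fun h => u.2 (hω u fun v => by simp [h])) 1
  rw [Nat.card_congr e, Nat.card_sigma, Finset.sum_congr rfl fun u _ => hfiber u,
    Finset.sum_const, Finset.card_univ, smul_eq_mul, Fintype.card_subtype_compl,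
    Fintype.card_subtype_eq, ← Nat.card_eq_fintype_card, natCard_eq_pow_finrank (K := k)]

end Counting

section Alternating

variable {k W : Type*} [Field k] [AddCommGroup W] [Module k W] {ω : W →ₗ[k] W →ₗ[k] k}

namespace LinearMap.IsAlt

theorem linearIndependent_pair (hω : ω.IsAlt) {x y : W} (hxy : ω x y ≠ 0) :
    LinearIndependent k ![x, y] := by
  refine LinearIndependent.pair_iff.mpr fun s t hst => ⟨?_, ?_⟩
  · have h : ω (s • x + t • y) y = s * ω x y := by simp [hω.self_eq_zero]
    simpa [hst, hxy] using h
  · have h : ω x (s • x + t • y) = t * ω x y := by simp [hω.self_eq_zero]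
    simpa [hst, hxy] using h

theorem finrank_span_pair (hω : ω.IsAlt) {x y : W} (hxy : ω x y ≠ 0) :
    finrank k (span k {x, y}) = 2 := by
  have h := finrank_span_eq_card (hω.linearIndependent_pair hxy)
  rwa [Matrix.range_cons_cons_empty, Fintype.card_fin] at h

theorem span_pair_eq (hω : ω.IsAlt) {P : Submodule k W} (hP : finrank k P = 2) {x y : W}
    (hx : x ∈ P) (hy : y ∈ P) (hxy : ω x y ≠ 0) : span k {x, y} = P := by
  have : FiniteDimensional k P := .of_finrank_pos (by omega)
  refine eq_of_le_of_finrank_le (span_le.mpr ?_) (by rw [hP, hω.finrank_span_pair hxy])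
  rintro z (rfl | rfl) <;> assumption

theorem separatingLeft_domRestrict_span_pair (hω : ω.IsAlt) {x y : W} (hxy : ω x y ≠ 0) :
    (ω.domRestrict₁₂ (span k {x, y}) (span k {x, y})).SeparatingLeft := by
  rintro ⟨u, hu⟩ horth
  obtain ⟨a, b, rfl⟩ := mem_span_pair.mp hu
  have hx : ω (a • x + b • y) x = -(b * ω x y) := by simp [hω.self_eq_zero, ← hω.neg x y]
  have hy : ω (a • x + b • y) y = a * ω x y := by simp [hω.self_eq_zero]
  have ha : a * ω x y = 0 := hy ▸ horth ⟨y, subset_span (by simp)⟩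
  have hb : -(b * ω x y) = 0 := hx ▸ horth ⟨x, subset_span (by simp)⟩
  simp only [neg_eq_zero, mul_eq_zero, hxy, or_false] at ha hb
  simp [ha, hb]

end LinearMap.IsAlt

variable (ω) in
def nonIsotropicPlanes : Set (Submodule k W) :=
  {P | finrank k P = 2 ∧ ∃ x ∈ P, ∃ y ∈ P, ω x y ≠ 0}

namespace LinearMap.IsAlt

def pairsEquivSigmaNonIsotropicPlanes (hω : ω.IsAlt) :
    {p : W × W // ω p.1 p.2 = 1} ≃
      Σ P : nonIsotropicPlanes ω, {p : P.1 × P.1 // ω p.1 p.2 = 1} where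
  toFun p :=
    ⟨⟨span k {p.1.1, p.1.2}, hω.finrank_span_pair (by simp [p.2]),
        p.1.1, subset_span (by simp), p.1.2, subset_span (by simp), by simp [p.2]⟩,
      (⟨p.1.1, subset_span (by simp)⟩, ⟨p.1.2, subset_span (by simp)⟩), p.2⟩
  invFun s := ⟨(s.2.1.1, s.2.1.2), s.2.2⟩
  left_inv p := rfl
  right_inv := by
    rintro ⟨⟨P, hP, -⟩, ⟨⟨u, hu⟩, ⟨v, hv⟩⟩, h⟩
    obtain rfl := hω.span_pair_eq hP hu hv (by simp [h])
    rfl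

theorem natCard_pairs_eq_one_of_mem_nonIsotropicPlanes [Finite k] (hω : ω.IsAlt)
    {P : Submodule k W} (hP : P ∈ nonIsotropicPlanes ω) :
    Nat.card {p : P × P // ω p.1 p.2 = 1} = (Nat.card k ^ 2 - 1) * Nat.card k := by
  obtain ⟨hP2, x, hx, y, hy, hxy⟩ := hP
  obtain rfl := hω.span_pair_eq hP2 hx hy hxy
  have : FiniteDimensional k (span k {x, y}) := .span_of_finite k (Set.toFinite _)
  have h := (hω.separatingLeft_domRestrict_span_pair hxy).natCard_pairs_eq_one
  rwa [hP2, pow_one] at h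

theorem natCard_nonIsotropicPlanes_mul [Finite k] [FiniteDimensional k W] (hω : ω.IsAlt)
    (hnd : ω.SeparatingLeft) :
    Nat.card (nonIsotropicPlanes ω) * ((Nat.card k ^ 2 - 1) * Nat.card k) =
      (Nat.card k ^ finrank k W - 1) * Nat.card k ^ (finrank k W - 1) := by
  have : Finite W := Module.finite_of_finite k
  have : Fintype (nonIsotropicPlanes ω) := Fintype.ofFinite _
  rw [← hnd.natCard_pairs_eq_one, Nat.card_congr hω.pairsEquivSigmaNonIsotropicPlanes,
    Nat.card_sigma,
    Finset.sum_congr rfl fun P _ => hω.natCard_pairs_eq_one_of_mem_nonIsotropicPlanes P.2,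
    Finset.sum_const, Finset.card_univ, smul_eq_mul, Nat.card_eq_fintype_card]

end LinearMap.IsAlt

end Alternating

theorem stmt5_general (k V : Type*) [Field k] [Fintype k] [AddCommGroup V] [Module k V]
    [FiniteDimensional k V]
    (ω : V →ₗ[k] V →ₗ[k] k)
    (halt : ∀ v : V, ω v v = 0)
    (hnd : ∀ v : V, (∀ w : V, ω v w = 0) → v = 0)
    (q n : ℕ)
    (hq : Fintype.card k = q) (hn : Module.finrank k V = n)
    (hn2 : 2 ≤ n) :
    Nat.card {P : Submodule k V // Module.finrank k ↥P = 2 ∧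
        ∃ x ∈ P, ∃ y ∈ P, ω x y ≠ 0} =
      q ^ (n - 2) * (q ^ n - 1) / (q ^ 2 - 1) := by
  have hcount := LinearMap.IsAlt.natCard_nonIsotropicPlanes_mul halt hnd
  have hpow : q ^ (n - 1) = q ^ (n - 2) * q := by rw [← pow_succ]; congr 1; omega
  rw [Nat.card_eq_fintype_card (α := k), hq, hn, hpow] at hcount
  have hq2 : 2 ≤ q := hq ▸ Fintype.one_lt_card
  have hplanes : Nat.card (nonIsotropicPlanes ω) * (q ^ 2 - 1) = q ^ (n - 2) * (q ^ n - 1) :=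
    Nat.eq_of_mul_eq_mul_right (show 0 < q by omega) (by rw [mul_assoc, hcount]; ring)
  refine (Nat.div_eq_of_eq_mul_left ?_ hplanes.symm).symm
  exact Nat.sub_pos_of_lt (Nat.one_lt_pow two_ne_zero (by omega))

/-- The number of non-isotropic planes in an n-dimensional symplectic vector
space over a field with q elements is q^{n−2}(q^n − 1)/(q² − 1). -/
theorem stmt5 (k V : Type*) [Field k] [Fintype k] [AddCommGroup V] [Module k V]
    [FiniteDimensional k V]
    (ω : V →ₗ[k] V →ₗ[k] k)
    (halt : ∀ v : V, ω v v = 0)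
    (hnd : ∀ v : V, (∀ w : V, ω v w = 0) → v = 0)
    (q n : ℕ)
    (hq : Fintype.card k = q) (hn : Module.finrank k V = n)
    (heven : Even n) (hn2 : 2 ≤ n) :
    Nat.card {P : Submodule k V // Module.finrank k ↥P = 2 ∧
        ∃ x ∈ P, ∃ y ∈ P, ω x y ≠ 0} =
      q ^ (n - 2) * (q ^ n - 1) / (q ^ 2 - 1) :=
  stmt5_general k V ω halt hnd q n hq hn hn2
end

section
/- Let k be a finite field, V a symplectic k-vector space of dimension 4, and X := Σ_{i∈V} X_i ∈ k[V]. Then X lies in the ideal D = 𝔪·(N), where 𝔪 is the augmentation (maximal) ideal of k[V] and (N) is the ideal generated by sums Σ_{i∈P} X_i over non-isotropic planes P. In particular, X = (Σ_{i∈P} X_i)(Σ_{i∈P'} X_i) for any two non-isotropic planes P, P' with P ∩ P' = 0. -/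
open AddMonoidAlgebra Module

open AddMonoidAlgebra Module

lemma aux_prod (k V : Type*) [Field k] [Fintype k] [AddCommGroup V] [Module k V]
    [FiniteDimensional k V] (P P' : Submodule k V) (hinf : P ⊓ P' = ⊥) (hsup : P ⊔ P' = ⊤) :
    (∑ᶠ i : V, (AddMonoidAlgebra.single i (1 : k) : AddMonoidAlgebra k V)) =
      (∑ᶠ i ∈ (P : Set V), (AddMonoidAlgebra.single i (1 : k) : AddMonoidAlgebra k V)) *
      (∑ᶠ i ∈ (P' : Set V), (AddMonoidAlgebra.single i (1 : k) : AddMonoidAlgebra k V)) := by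
  classical
  haveI : Finite V := Module.finite_of_finite k
  haveI : Fintype V := Fintype.ofFinite V
  rw [← Set.coe_toFinset (P : Set V), ← Set.coe_toFinset (P' : Set V),
    finsum_mem_coe_finset, finsum_mem_coe_finset, finsum_eq_sum_of_fintype,
    Finset.sum_mul_sum]
  simp only [AddMonoidAlgebra.single_mul_single, one_mul]
  rw [← Finset.sum_product']
  refine (Finset.sum_bij (fun (x : V × V) _ => x.1 + x.2) ?_ ?_ ?_ ?_).symm
  · intro a _; exact Finset.mem_univ _
  · rintro ⟨a1, a2⟩ ha ⟨b1, b2⟩ hb h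
    simp only [Finset.mem_product, Set.mem_toFinset, SetLike.mem_coe] at ha hb
    have h' : a1 + a2 = b1 + b2 := h
    have h1 : a1 - b1 ∈ P := P.sub_mem ha.1 hb.1
    have h2 : a1 - b1 ∈ P' := by
      have : a1 - b1 = b2 - a2 := by linear_combination (norm := abel) h'
      rw [this]; exact P'.sub_mem hb.2 ha.2
    have : a1 - b1 = 0 := by
      have := hinf ▸ Submodule.mem_inf.mpr ⟨h1, h2⟩
      simpa using this
    have ha1 : a1 = b1 := by linear_combination (norm := abel) this
    have ha2 : a2 = b2 := by
      rw [ha1] at h'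
      linear_combination (norm := abel) h'
    simp [ha1, ha2]
  · intro b _
    have : b ∈ P ⊔ P' := hsup ▸ Submodule.mem_top
    obtain ⟨p, hp, q, hq, hpq⟩ := Submodule.mem_sup.mp this
    exact ⟨(p, q), by simp [Set.mem_toFinset, hp, hq], hpq⟩
  · intros; rfl



lemma aux_mem (k V : Type*) [Field k] [Fintype k] [AddCommGroup V] [Module k V]
    [FiniteDimensional k V] (P : Submodule k V) (hP : Module.finrank k ↥P = 2) :
    (∑ᶠ i ∈ (P : Set V), (AddMonoidAlgebra.single i (1 : k) : AddMonoidAlgebra k V)) ∈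
      Ideal.span {x : AddMonoidAlgebra k V | ∃ i : V,
        x = AddMonoidAlgebra.single i (1 : k) - 1} := by
  classical
  haveI : Finite V := Module.finite_of_finite k
  haveI : Fintype V := Fintype.ofFinite V
  rw [← Set.coe_toFinset (P : Set V), finsum_mem_coe_finset]
  set A := (P : Set V).toFinset with hA
  have hcard : ((A.card : k)) = 0 := by
    rw [hA, Set.toFinset_card]
    simp only [SetLike.coe_sort_coe]
    rw [card_eq_pow_finrank (K := k) (V := ↥P), hP]
    push_cast
    rw [FiniteField.cast_card_eq_zero]
    ring
  have key : ∑ p ∈ A, (AddMonoidAlgebra.single p (1 : k) : AddMonoidAlgebra k V) =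
      ∑ p ∈ A, ((AddMonoidAlgebra.single p (1 : k) : AddMonoidAlgebra k V) - 1) := by
    rw [Finset.sum_sub_distrib, Finset.sum_const]
    have : (A.card • (1 : AddMonoidAlgebra k V)) = 0 := by
      rw [← Nat.cast_smul_eq_nsmul k, hcard, zero_smul]
    rw [this, sub_zero]
  rw [key]
  exact Submodule.sum_mem _ fun p _ => Ideal.subset_span ⟨p, rfl⟩


/-- For a 4-dimensional symplectic space V over a finite field, the element
X = Σ_{i∈V} X_i of k[V] lies in 𝔪·(N), and X = S_P · S_{P'} for any two
non-isotropic planes P, P' with P ∩ P' = 0. -/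
theorem stmt11 (k V : Type*) [Field k] [Fintype k] [AddCommGroup V] [Module k V]
    [FiniteDimensional k V]
    (ω : V →ₗ[k] V →ₗ[k] k)
    (halt : ∀ v : V, ω v v = 0)
    (hnd : ∀ v : V, (∀ w : V, ω v w = 0) → v = 0)
    (hdim : Module.finrank k V = 4) :
    (∑ᶠ i : V, (AddMonoidAlgebra.single i (1 : k) : AddMonoidAlgebra k V)) ∈
      Ideal.span {x : AddMonoidAlgebra k V | ∃ i : V,
          x = AddMonoidAlgebra.single i (1 : k) - 1} *
      Ideal.span {x : AddMonoidAlgebra k V | ∃ P : Submodule k V,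
          Module.finrank k ↥P = 2 ∧ (∃ u ∈ P, ∃ v ∈ P, ω u v ≠ 0) ∧
          x = ∑ᶠ i ∈ (P : Set V), (AddMonoidAlgebra.single i (1 : k) : AddMonoidAlgebra k V)} ∧
    ∀ P P' : Submodule k V,
      Module.finrank k ↥P = 2 → Module.finrank k ↥P' = 2 →
      (∃ u ∈ P, ∃ v ∈ P, ω u v ≠ 0) → (∃ u ∈ P', ∃ v ∈ P', ω u v ≠ 0) →
      P ⊓ P' = ⊥ →
      (∑ᶠ i : V, (AddMonoidAlgebra.single i (1 : k) : AddMonoidAlgebra k V)) =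
        (∑ᶠ i ∈ (P : Set V), (AddMonoidAlgebra.single i (1 : k) : AddMonoidAlgebra k V)) *
        (∑ᶠ i ∈ (P' : Set V), (AddMonoidAlgebra.single i (1 : k) : AddMonoidAlgebra k V)) := by
  classical
  have hskew : ∀ u v : V, ω u v = - ω v u := by
    intro u v
    have h := halt (u + v)
    simp only [map_add, LinearMap.add_apply, halt u, halt v, zero_add, add_zero] at h
    rw [add_comm] at h
    exact eq_neg_of_add_eq_zero_left h
  have hsup_of : ∀ P P' : Submodule k V, finrank k ↥P = 2 → finrank k ↥P' = 2 →
      P ⊓ P' = ⊥ → P ⊔ P' = ⊤ := by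
    intro P P' h2 h2' hinf
    apply Submodule.eq_top_of_finrank_eq
    have e := Submodule.finrank_sup_add_finrank_inf_eq P P'
    rw [hinf, h2, h2', finrank_bot] at e
    rw [hdim]; omega
  haveI : Nontrivial V := Module.nontrivial_of_finrank_pos (R := k) (by omega)
  obtain ⟨v₁, hv₁⟩ := exists_ne (0 : V)
  have h' : ¬ ∀ w, ω v₁ w = 0 := fun h => hv₁ (hnd v₁ h)
  push_neg at h'
  obtain ⟨v₂, h12⟩ := h'
  set P₀ := Submodule.span k {v₁, v₂} with hP₀def
  have hv₁P : v₁ ∈ P₀ := Submodule.subset_span (by simp)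
  have hv₂P : v₂ ∈ P₀ := Submodule.subset_span (by simp)
  have hindep : LinearIndependent k ![v₁, v₂] := by
    rw [LinearIndependent.pair_iff]
    intro s t hst
    have h1 : ω v₁ (s • v₁ + t • v₂) = 0 := by rw [hst]; simp
    simp only [map_add, map_smul, halt, smul_eq_mul, mul_zero, zero_add] at h1
    have ht : t = 0 := by
      rcases mul_eq_zero.mp h1 with h | h
      · exact h
      · exact absurd h h12
    have h2 : ω v₂ (s • v₁ + t • v₂) = 0 := by rw [hst]; simp
    simp only [map_add, map_smul, halt, smul_eq_mul, mul_zero, add_zero, ht, zero_mul] at h2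
    refine ⟨?_, ht⟩
    rcases mul_eq_zero.mp h2 with h | h
    · exact h
    · exfalso; rw [hskew] at h; simp at h; exact h12 h
  have hP₀2 : finrank k ↥P₀ = 2 := by
    have hr : Set.range ![v₁, v₂] = {v₁, v₂} := by
      simp [Matrix.range_cons, Matrix.range_empty, Set.pair_comm]
    have := finrank_span_eq_card hindep
    rw [hr] at this
    simpa using this
  set Q := LinearMap.ker (ω v₁) ⊓ LinearMap.ker (ω v₂) with hQdef
  have hmemQ : ∀ x, x ∈ Q ↔ ω v₁ x = 0 ∧ ω v₂ x = 0 := fun x => by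
    simp [hQdef, Submodule.mem_inf, LinearMap.mem_ker]
  have hPQ : P₀ ⊓ Q = ⊥ := by
    rw [eq_bot_iff]
    rintro x hx
    obtain ⟨hxP, hxQ⟩ := Submodule.mem_inf.mp hx
    obtain ⟨a, b, rfl⟩ := Submodule.mem_span_pair.mp hxP
    obtain ⟨e1, e2⟩ := (hmemQ _).mp hxQ
    simp only [map_add, map_smul, halt, smul_eq_mul, mul_zero, zero_add, add_zero] at e1 e2
    have hb : b = 0 := by
      rcases mul_eq_zero.mp e1 with h | h
      · exact h
      · exact absurd h h12
    have ha : a = 0 := by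
      rcases mul_eq_zero.mp e2 with h | h
      · exact h
      · exfalso; rw [hskew] at h; simp at h; exact h12 h
    simp [ha, hb]
  have hker : ∀ u w : V, ω u w ≠ 0 → finrank k ↥(LinearMap.ker (ω u)) = 3 := by
    intro u w huw
    have hr : LinearMap.range (ω u) = ⊤ := by
      rw [LinearMap.range_eq_top]
      intro c
      refine ⟨(c / ω u w) • w, ?_⟩
      rw [map_smul, smul_eq_mul]
      field_simp
    have e := LinearMap.finrank_range_add_finrank_ker (ω u)
    rw [hr, finrank_top, Module.finrank_self, hdim] at e
    omega
  have hQ2 : finrank k ↥Q = 2 := by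
    have h21 : ω v₂ v₁ ≠ 0 := by
      rw [hskew]; simpa using h12
    have e1 := Submodule.finrank_sup_add_finrank_inf_eq (LinearMap.ker (ω v₁)) (LinearMap.ker (ω v₂))
    have l1 := Submodule.finrank_le (LinearMap.ker (ω v₁) ⊔ LinearMap.ker (ω v₂))
    rw [hker v₁ v₂ h12, hker v₂ v₁ h21, ← hQdef] at e1
    rw [hdim] at l1
    have e2 := Submodule.finrank_sup_add_finrank_inf_eq P₀ Q
    have l2 := Submodule.finrank_le (P₀ ⊔ Q)
    rw [hPQ, finrank_bot, hP₀2] at e2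
    rw [hdim] at l2
    omega
  have hQiso : ∃ u ∈ Q, ∃ v ∈ Q, ω u v ≠ 0 := by
    obtain ⟨u, huQ, hu0⟩ : ∃ u ∈ Q, u ≠ 0 := by
      have : Q ≠ ⊥ := by
        intro h
        rw [h, finrank_bot] at hQ2
        omega
      obtain ⟨u, huQ, hu0⟩ := Submodule.exists_mem_ne_zero_of_ne_bot this
      exact ⟨u, huQ, hu0⟩
    have h' : ¬ ∀ w, ω u w = 0 := fun h => hu0 (hnd u h)
    push_neg at h'
    obtain ⟨w, hw⟩ := h'
    have hsupPQ : P₀ ⊔ Q = ⊤ := hsup_of P₀ Q hP₀2 hQ2 hPQ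
    have hwmem : w ∈ P₀ ⊔ Q := by rw [hsupPQ]; trivial
    obtain ⟨p, hp, q, hq, rfl⟩ := Submodule.mem_sup.mp hwmem
    refine ⟨u, huQ, q, hq, ?_⟩
    have hup : ω u p = 0 := by
      obtain ⟨a, b, rfl⟩ := Submodule.mem_span_pair.mp hp
      obtain ⟨e1, e2⟩ := (hmemQ u).mp huQ
      have f1 : ω u v₁ = 0 := by rw [hskew, e1, neg_zero]
      have f2 : ω u v₂ = 0 := by rw [hskew, e2, neg_zero]
      simp [map_add, map_smul, f1, f2]
    rw [map_add, hup, zero_add] at hw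
    exact hw
  refine ⟨?_, ?_⟩
  · rw [aux_prod k V P₀ Q hPQ (hsup_of _ _ hP₀2 hQ2 hPQ)]
    exact Ideal.mul_mem_mul (aux_mem k V P₀ hP₀2)
      (Ideal.subset_span ⟨Q, hQ2, hQiso, rfl⟩)
  · intro P P' h2 h2' _ _ hinf
    exact aux_prod k V P P' hinf (hsup_of P P' h2 h2' hinf)
end

section
/- Let A be a 4-dimensional 𝔽₂-symplectic vector space realized as E[2] × E[2] for E the elliptic curve ℂ/⟨1, ξ⟩ with ξ = e^{2πi/6}, and let G be the group of automorphisms of E × E generated by the matrices g₁ = [[ξ,0],[0,1]], g₂ = [[0,1],[1,0]], g₃ = [[1,1],[0,1]] acting on 2-torsion. Then the induced action of G on the set of 35 planes of (𝔽₂)⁴ ≅ A[2] has exactly two orbits, of cardinalities 5 and 30. -/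
/- The 2-torsion group A[2] of A = E_ξ × E_ξ, as an 𝔽₂-symplectic space, is
modelled combinatorially (as in the context) as V = (𝔽₂)² × (𝔽₂)², where:
g₁ cyclically permutes the three nonzero vectors of the first factor (the
action of multiplication by ξ on E_ξ[2]), g₂ swaps the two factors, and g₃ is
the transvection (u,v) ↦ (u+v, v). -/

abbrev V17 : Type := (ZMod 2 × ZMod 2) × (ZMod 2 × ZMod 2)

/-- Cyclic permutation of the three nonzero vectors of (𝔽₂)². -/
def cycMap : (ZMod 2 × ZMod 2) →ₗ[ZMod 2] (ZMod 2 × ZMod 2) where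
  toFun p := (p.2, p.1 + p.2)
  map_add' := by decide
  map_smul' := by decide

def cycInvMap : (ZMod 2 × ZMod 2) →ₗ[ZMod 2] (ZMod 2 × ZMod 2) where
  toFun p := (p.1 + p.2, p.1)
  map_add' := by decide
  map_smul' := by decide

def cyc : (ZMod 2 × ZMod 2) ≃ₗ[ZMod 2] (ZMod 2 × ZMod 2) :=
  LinearEquiv.ofLinear cycMap cycInvMap
    (by apply LinearMap.ext; decide) (by apply LinearMap.ext; decide)

/-- g₁ : cyclic permutation of the three nonzero vectors of the first factor. -/
def g₁ : V17 ≃ₗ[ZMod 2] V17 := cyc.prodCongr (LinearEquiv.refl (ZMod 2) _)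

def swapMap : V17 →ₗ[ZMod 2] V17 where
  toFun p := (p.2, p.1)
  map_add' _ _ := rfl
  map_smul' _ _ := rfl

/-- g₂ : swap of the two factors. -/
def g₂ : V17 ≃ₗ[ZMod 2] V17 :=
  LinearEquiv.ofLinear swapMap swapMap (by apply LinearMap.ext; intro p; rfl)
    (by apply LinearMap.ext; intro p; rfl)

def transMap : V17 →ₗ[ZMod 2] V17 where
  toFun p := (p.1 + p.2, p.2)
  map_add' p q := by
    refine Prod.ext ?_ rfl
    show p.1 + q.1 + (p.2 + q.2) = p.1 + p.2 + (q.1 + q.2)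
    abel
  map_smul' c p := by
    refine Prod.ext ?_ rfl
    show c • p.1 + c • p.2 = c • (p.1 + p.2)
    rw [smul_add]

/-- g₃ : the transvection (u,v) ↦ (u+v, v). -/
def g₃ : V17 ≃ₗ[ZMod 2] V17 :=
  LinearEquiv.ofLinear transMap transMap
    (by apply LinearMap.ext; decide) (by apply LinearMap.ext; decide)

/-- The group G generated by g₁, g₂, g₃. -/
def G17 : Subgroup (V17 ≃ₗ[ZMod 2] V17) := Subgroup.closure {g₁, g₂, g₃}

/-- Two planes are in the same G-orbit. -/
def sameOrbit (P Q : Submodule (ZMod 2) V17) : Prop :=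
  ∃ g ∈ G17, P.map (g : V17 →ₗ[ZMod 2] V17) = Q

/-!
Identify (𝔽₂)² with 𝔽₄ so that `cyc` is multiplication by a primitive cube root of unity.
Then g₁, g₂, g₃ are 𝔽₄-linear, and the orbit of size 5 consists of the five 𝔽₄-lines of 𝔽₄².
The orbits are found by breadth-first search: the ball of radius n around a plane in the Schreier
graph of the generators lies in its orbit, and once the ball stops growing it is the whole orbit,
since a finite set mapped into itself by each generator is invariant under the group they
generate. Both balls, and the fact that every plane lies in one of them, are checked by direct
computation.
-/

open Pointwise Module Submodule

section SchreierBall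

variable {Γ α : Type*} [Group Γ] [MulAction Γ α] [DecidableEq α] {k : ℕ}

def schreierBall (s : Fin k → Γ) (a : α) : ℕ → Finset α
  | 0 => {a}
  | n + 1 => (schreierBall s a n).biUnion fun x => insert x (Finset.univ.image fun i => s i • x)

variable {s : Fin k → Γ} {a : α}

theorem schreierBall_subset_succ (n : ℕ) : schreierBall s a n ⊆ schreierBall s a (n + 1) :=
  fun x hx => Finset.mem_biUnion.2 ⟨x, hx, Finset.mem_insert_self _ _⟩

theorem smul_mem_schreierBall_succ {n : ℕ} {x : α} (hx : x ∈ schreierBall s a n) (i : Fin k) :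
    s i • x ∈ schreierBall s a (n + 1) :=
  Finset.mem_biUnion.2
    ⟨x, hx, Finset.mem_insert_of_mem (Finset.mem_image_of_mem _ (Finset.mem_univ i))⟩

theorem mem_schreierBall_self (n : ℕ) : a ∈ schreierBall s a n := by
  induction n with
  | zero => exact Finset.mem_singleton_self a
  | succ n ih => exact schreierBall_subset_succ n ih

theorem exists_smul_eq_of_mem_schreierBall {n : ℕ} {x : α} (hx : x ∈ schreierBall s a n) :
    ∃ g ∈ Subgroup.closure (Set.range s), g • a = x := by
  induction n generalizing x with
  | zero => exact ⟨1, one_mem _, by rw [one_smul, Finset.mem_singleton.1 hx]⟩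
  | succ n ih =>
    obtain ⟨y, hy, hxy⟩ := Finset.mem_biUnion.1 hx
    obtain ⟨g, hg, rfl⟩ := ih hy
    rcases Finset.mem_insert.1 hxy with rfl | hxy
    · exact ⟨g, hg, rfl⟩
    · obtain ⟨i, -, rfl⟩ := Finset.mem_image.1 hxy
      exact ⟨s i * g, mul_mem (Subgroup.subset_closure ⟨i, rfl⟩) hg, mul_smul _ _ _⟩

-- Each generator maps the finite ball injectively into itself, hence onto it, so the ball is
-- also closed under inverses.
theorem smul_mem_of_schreierBall_succ_eq {n : ℕ}
    (h : schreierBall s a (n + 1) = schreierBall s a n) {g : Γ}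
    (hg : g ∈ Subgroup.closure (Set.range s)) {x : α} (hx : x ∈ schreierBall s a n) :
    g • x ∈ schreierBall s a n := by
  suffices Subgroup.closure (Set.range s) ≤ MulAction.stabilizer Γ (schreierBall s a n) by
    rw [← MulAction.mem_stabilizer_iff.1 (this hg)]
    exact Finset.smul_mem_smul_finset hx
  refine (Subgroup.closure_le _).2 ?_
  rintro _ ⟨i, rfl⟩
  refine MulAction.mem_stabilizer_iff.2
    (Finset.eq_of_subset_of_card_le ?_ (Finset.card_smul_finset _ _).ge)
  intro y hy
  obtain ⟨x, hx, rfl⟩ := Finset.mem_smul_finset.1 hy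
  exact h ▸ smul_mem_schreierBall_succ hx i

theorem mem_schreierBall_iff {n : ℕ} (h : schreierBall s a (n + 1) = schreierBall s a n)
    {x : α} :
    x ∈ schreierBall s a n ↔ ∃ g ∈ Subgroup.closure (Set.range s), g • a = x :=
  ⟨exists_smul_eq_of_mem_schreierBall,
    fun ⟨_, hg, hx⟩ => hx ▸ smul_mem_of_schreierBall_succ_eq h hg (mem_schreierBall_self n)⟩

end SchreierBall

def gens : Fin 3 → V17 ≃ₗ[ZMod 2] V17 := ![g₁, g₂, g₃]

def spanPairFinset (x y : V17) : Finset V17 := {0, x, y, x + y}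

theorem closure_range_gens : Subgroup.closure (Set.range gens) = G17 := by
  rw [G17]
  congr 1
  ext g
  simp only [gens, Matrix.range_cons, Matrix.range_empty, Set.union_empty, Set.mem_union,
    Set.mem_singleton_iff, Set.mem_insert_iff]

theorem coe_span_pair_zmod_two {V : Type*} [AddCommGroup V] [Module (ZMod 2) V] (x y : V) :
    (span (ZMod 2) {x, y} : Set V) = {0, x, y, x + y} := by
  ext z
  have h : ∀ c : ZMod 2, c = 0 ∨ c = 1 := by decide
  simp only [SetLike.mem_coe, mem_span_pair, Set.mem_insert_iff, Set.mem_singleton_iff]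
  constructor
  · rintro ⟨c, d, rfl⟩
    rcases h c with rfl | rfl <;> rcases h d with rfl | rfl <;> simp
  · rintro (rfl | rfl | rfl | rfl)
    exacts [⟨0, 0, by simp⟩, ⟨1, 0, by simp⟩, ⟨0, 1, by simp⟩, ⟨1, 1, by simp⟩]

theorem finrank_eq_two_iff_natCard {V : Type*} [AddCommGroup V] [Module (ZMod 2) V] [Finite V]
    (Q : Submodule (ZMod 2) V) : finrank (ZMod 2) Q = 2 ↔ Nat.card Q = 4 := by
  rw [natCard_eq_pow_finrank (K := ZMod 2), Nat.card_zmod]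
  exact (Nat.pow_right_injective le_rfl).eq_iff.symm

theorem exists_eq_span_pair_of_finrank_eq_two {K V : Type*} [DivisionRing K] [AddCommGroup V]
    [Module K V] {Q : Submodule K V} (h : finrank K Q = 2) : ∃ x y : V, Q = span K {x, y} := by
  have : Module.Finite K Q := Module.finite_of_finrank_eq_succ h
  let b := finBasisOfFinrankEq K Q h
  refine ⟨b 0, b 1, ?_⟩
  have hb : Set.range b = {b 0, b 1} := by
    ext
    simp [Fin.exists_fin_two, eq_comm]
  calc Q = (span K (Set.range b)).map Q.subtype := by rw [b.span_eq, Q.map_subtype_top]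
       _ = span K {(b 0 : V), (b 1 : V)} := by rw [Submodule.map_span, hb, Set.image_pair]; rfl

theorem coe_span_pair_eq_spanPairFinset (x y : V17) :
    (span (ZMod 2) {x, y} : Set V17) = spanPairFinset x y := by
  rw [coe_span_pair_zmod_two]
  simp [spanPairFinset]

theorem finrank_span_pair_eq_two_iff (x y : V17) :
    finrank (ZMod 2) (span (ZMod 2) {x, y}) = 2 ↔ (spanPairFinset x y).card = 4 := by
  rw [finrank_eq_two_iff_natCard, ← SetLike.coe_sort_coe, coe_span_pair_eq_spanPairFinset,
    Nat.card_coe_set_eq, Set.ncard_coe_finset]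

theorem coe_map_linearEquiv {R M : Type*} [Semiring R] [AddCommMonoid M] [Module R M]
    (g : M ≃ₗ[R] M) (P : Submodule R M) : (P.map (g : M →ₗ[R] M) : Set M) = g • (P : Set M) := by
  rw [Submodule.map_coe, ← Set.image_smul]
  rfl

section Orbit

variable {x₀ y₀ : V17} {n : ℕ}

theorem image_coe_setOf_sameOrbit
    (hF : schreierBall gens (spanPairFinset x₀ y₀) (n + 1)
      = schreierBall gens (spanPairFinset x₀ y₀) n) :
    SetLike.coe '' {Q | sameOrbit (span (ZMod 2) {x₀, y₀}) Q}
      = (↑) '' (schreierBall gens (spanPairFinset x₀ y₀) n : Set (Finset V17)) := by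
  ext X
  simp only [Set.mem_image, Finset.mem_coe, mem_schreierBall_iff hF, closure_range_gens,
    Set.mem_ofPred_eq, sameOrbit, exists_exists_and_eq_and, Finset.coe_smul_finset,
    coe_map_linearEquiv, coe_span_pair_eq_spanPairFinset]

theorem sameOrbit_span_pair_iff
    (hF : schreierBall gens (spanPairFinset x₀ y₀) (n + 1)
      = schreierBall gens (spanPairFinset x₀ y₀) n)
    (x y : V17) :
    sameOrbit (span (ZMod 2) {x₀, y₀}) (span (ZMod 2) {x, y})
      ↔ spanPairFinset x y ∈ schreierBall gens (spanPairFinset x₀ y₀) n := by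
  rw [← Finset.mem_coe, ← Finset.coe_injective.mem_set_image, ← image_coe_setOf_sameOrbit hF,
    ← coe_span_pair_eq_spanPairFinset, SetLike.coe_injective.mem_set_image]
  rfl

theorem natCard_sameOrbit
    (hF : schreierBall gens (spanPairFinset x₀ y₀) (n + 1)
      = schreierBall gens (spanPairFinset x₀ y₀) n) :
    Nat.card {Q : Submodule (ZMod 2) V17 // finrank (ZMod 2) Q
        = finrank (ZMod 2) (span (ZMod 2) {x₀, y₀}) ∧ sameOrbit (span (ZMod 2) {x₀, y₀}) Q}
      = (schreierBall gens (spanPairFinset x₀ y₀) n).card := by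
  have hrank : ∀ Q, sameOrbit (span (ZMod 2) {x₀, y₀}) Q →
      finrank (ZMod 2) Q = finrank (ZMod 2) (span (ZMod 2) {x₀, y₀}) := by
    rintro _ ⟨g, -, rfl⟩
    exact LinearEquiv.finrank_map_eq g _
  rw [← Set.ncard_coe_finset, ← Set.ncard_image_of_injective _ Finset.coe_injective,
    ← image_coe_setOf_sameOrbit hF, Set.ncard_image_of_injective _ SetLike.coe_injective,
    ← Nat.card_coe_set_eq]
  exact Nat.card_congr (Equiv.subtypeEquivRight fun Q => and_iff_right_of_imp (hrank Q))

end Orbit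

theorem schreierBall_five_stable :
    schreierBall gens (spanPairFinset ((0,0),(1,0)) ((0,0),(0,1))) 4
        = schreierBall gens (spanPairFinset ((0,0),(1,0)) ((0,0),(0,1))) 3 ∧
      (schreierBall gens (spanPairFinset ((0,0),(1,0)) ((0,0),(0,1))) 3).card = 5 := by
  decide +kernel

theorem schreierBall_thirty_stable :
    schreierBall gens (spanPairFinset ((0,0),(0,1)) ((0,1),(0,0))) 8
        = schreierBall gens (spanPairFinset ((0,0),(0,1)) ((0,1),(0,0))) 7 ∧
      (schreierBall gens (spanPairFinset ((0,0),(0,1)) ((0,1),(0,0))) 7).card = 30 := by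
  decide +kernel

theorem not_mem_schreierBall_five :
    spanPairFinset ((0,0),(0,1)) ((0,1),(0,0))
      ∉ schreierBall gens (spanPairFinset ((0,0),(1,0)) ((0,0),(0,1))) 3 := by
  decide +kernel

theorem mem_schreierBall_five_or_thirty :
    ∀ x y : V17, (spanPairFinset x y).card = 4 →
      spanPairFinset x y ∈ schreierBall gens (spanPairFinset ((0,0),(1,0)) ((0,0),(0,1))) 3 ∨
      spanPairFinset x y ∈ schreierBall gens (spanPairFinset ((0,0),(0,1)) ((0,1),(0,0))) 7 := by
  decide +kernel

/-- The action of G on the 35 planes of (𝔽₂)⁴ has exactly two orbits, of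
cardinalities 5 and 30. -/
theorem stmt17 :
    ∃ P₁ P₂ : Submodule (ZMod 2) V17,
      Module.finrank (ZMod 2) ↥P₁ = 2 ∧ Module.finrank (ZMod 2) ↥P₂ = 2 ∧
      ¬ sameOrbit P₁ P₂ ∧
      Nat.card {Q : Submodule (ZMod 2) V17 //
          Module.finrank (ZMod 2) ↥Q = 2 ∧ sameOrbit P₁ Q} = 5 ∧
      Nat.card {Q : Submodule (ZMod 2) V17 //
          Module.finrank (ZMod 2) ↥Q = 2 ∧ sameOrbit P₂ Q} = 30 ∧
      ∀ Q : Submodule (ZMod 2) V17, Module.finrank (ZMod 2) ↥Q = 2 →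
        sameOrbit P₁ Q ∨ sameOrbit P₂ Q := by
  obtain ⟨hclosed₁, hcard₁⟩ := schreierBall_five_stable
  obtain ⟨hclosed₂, hcard₂⟩ := schreierBall_thirty_stable
  have hrank₁ := (finrank_span_pair_eq_two_iff ((0,0),(1,0)) ((0,0),(0,1))).2 (by decide)
  have hrank₂ := (finrank_span_pair_eq_two_iff ((0,0),(0,1)) ((0,1),(0,0))).2 (by decide)
  refine ⟨_, _, hrank₁, hrank₂, ?_, ?_, ?_, ?_⟩
  · rw [sameOrbit_span_pair_iff hclosed₁]
    exact not_mem_schreierBall_five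
  · rw [← hcard₁, ← natCard_sameOrbit hclosed₁, hrank₁]
  · rw [← hcard₂, ← natCard_sameOrbit hclosed₂, hrank₂]
  · intro Q hQ
    obtain ⟨x, y, rfl⟩ := exists_eq_span_pair_of_finrank_eq_two hQ
    rw [sameOrbit_span_pair_iff hclosed₁, sameOrbit_span_pair_iff hclosed₂]
    exact mem_schreierBall_five_or_thirty x y ((finrank_span_pair_eq_two_iff x y).1 hQ)
end
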